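/- Let ε ∈ (0, 1/2), δ ∈ [0, 1/2), let L be a nonnegative integer, and set p = e^{Lε}/2 + δ·Σ_{l=0}^{L−1} e^{lε}; assume p ≤ 1. Let a : {0,…,L} → [0,1] satisfy a(0) ≤ 1/2 and a(j+1) ≤ e^{ε} a(j) + δ for every 0 ≤ j ≤ L−1. Then a(L) ≤ p, and consequently, for every odd positive integer K, | Σ_{l=(K+1)/2}^{K} C(K,l) p^l (1−p)^{K−l} − a(L) | ≥ Σ_{l=(K+1)/2}^{K} C(K,l) p^l (1−p)^{K−l} − p. (This is the hard-instance construction underlying the lower bound on the error of any (ε,δ)-differentially-private algorithm computing the majority of K i.i.d. (ε,δ)-differentially-private mechanisms: along a chain of L adjacent datasets, the algorithm's probability a(L) of outputting 1 cannot exceed p, while the true majority probability is the binomial tail, so the error is at least Pr[majority = 1] − p.) -/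
import Mathlib


open Finset

/-- hard-instance construction for the error lower bound. Along a
chain of `L` adjacent datasets, any `(ε,δ)`-DP output probability `a` starting at
`a(0) ≤ 1/2` satisfies `a(L) ≤ p := e^{Lε}/2 + δ Σ_{l<L} e^{lε}`; hence for any
odd `K` the error against the binomial majority tail is at least the tail minus
`p`. -/
theorem statement17 (ε δ : ℝ) (hε0 : 0 < ε) (hε1 : ε < 1 / 2)
    (hδ0 : 0 ≤ δ) (hδ1 : δ < 1 / 2)
    (L : ℕ) (p : ℝ)
    (hp : p = Real.exp ((L : ℝ) * ε) / 2 + δ * ∑ l ∈ Finset.range L, Real.exp ((l : ℝ) * ε))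
    (hp1 : p ≤ 1)
    (a : ℕ → ℝ) (ha01 : ∀ j ≤ L, 0 ≤ a j ∧ a j ≤ 1)
    (ha0 : a 0 ≤ 1 / 2)
    (harec : ∀ j < L, a (j + 1) ≤ Real.exp ε * a j + δ) :
    a L ≤ p ∧
    ∀ K : ℕ, Odd K → 0 < K →
      (∑ l ∈ Finset.Icc ((K + 1) / 2) K, (K.choose l : ℝ) * p ^ l * (1 - p) ^ (K - l)) - p
      ≤ |(∑ l ∈ Finset.Icc ((K + 1) / 2) K, (K.choose l : ℝ) * p ^ l * (1 - p) ^ (K - l)) - a L| := by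
  have key : ∀ j, j ≤ L →
      a j ≤ Real.exp ((j : ℝ) * ε) / 2 + δ * ∑ l ∈ Finset.range j, Real.exp ((l : ℝ) * ε) := by
    intro j
    induction j with
    | zero => intro _; simpa using ha0
    | succ n ih =>
      intro hn
      have hnL : n < L := hn
      have h1 := harec n hnL
      have h2 := ih (le_of_lt hnL)
      have hexp : (0 : ℝ) < Real.exp ε := Real.exp_pos ε
      calc a (n + 1) ≤ Real.exp ε * a n + δ := h1
        _ ≤ Real.exp ε * (Real.exp ((n : ℝ) * ε) / 2
              + δ * ∑ l ∈ Finset.range n, Real.exp ((l : ℝ) * ε)) + δ := by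
            have := mul_le_mul_of_nonneg_left h2 hexp.le
            linarith
        _ = Real.exp (((n + 1 : ℕ) : ℝ) * ε) / 2
              + δ * ∑ l ∈ Finset.range (n + 1), Real.exp ((l : ℝ) * ε) := by
            rw [Finset.sum_range_succ' (fun l => Real.exp ((l : ℝ) * ε)) n]
            have e2 : ∀ l : ℕ, Real.exp (((l + 1 : ℕ) : ℝ) * ε)
                = Real.exp ε * Real.exp ((l : ℝ) * ε) := by
              intro l; rw [← Real.exp_add]; ring_nf; push_cast; ring_nf
            have e1 : Real.exp (((n + 1 : ℕ) : ℝ) * ε) = Real.exp ε * Real.exp ((n : ℝ) * ε) := e2 n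
            simp only [Nat.cast_zero, zero_mul, Real.exp_zero, e2, e1]
            rw [← Finset.mul_sum]
            ring
  have haL : a L ≤ p := by rw [hp]; exact key L le_rfl
  refine ⟨haL, fun K _ _ => ?_⟩
  have : (∑ l ∈ Finset.Icc ((K + 1) / 2) K, (K.choose l : ℝ) * p ^ l * (1 - p) ^ (K - l)) - p
      ≤ (∑ l ∈ Finset.Icc ((K + 1) / 2) K, (K.choose l : ℝ) * p ^ l * (1 - p) ^ (K - l)) - a L := by
    linarith
  exact this.trans (le_abs_self _)
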